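/- Let k_on, k_off : [0,∞) → ℝ be C¹, let k_c, k_f : [0,∞)×[0,∞) → ℝ be continuous and symmetric, and set T(V,x) = V·k_on(x) − k_off(x). Let T₀ > 0, V ∈ C¹([0,T₀]) with V(0) = V₀, and u ∈ C¹([0,∞)×[0,T₀]) with u(x,0) = u₀(x), such that there exists M > 0 with u(x,t) = 0 for all x ≥ M and all t ∈ [0,T₀]. Assume that for all t ∈ (0,T₀): V'(t) = −∫_0^∞ T(V(t),x) u(x,t) dx, and for all x > 0, ∂_t u(x,t) = −∂_x( T(V(t),x) u(x,t) ) + Q_c(u(·,t))(x) − Q_f(u(·,t))(x). Then for every t ∈ [0,T₀], V(t) = V₀ + ∫_0^∞ x (u₀(x) − u(x,t)) dx; i.e. the ODE for the monomer concentration can be replaced by the mass conservation formula. -/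

import Mathlib

open MeasureTheory

/-- The coagulation operator:
`Q_c(u)(x) = (1/2)∫_0^x k_c(y, x−y) u(y) u(x−y) dy − u(x) ∫_0^∞ k_c(x,y) u(y) dy`. -/
noncomputable def Qc (kc : ℝ → ℝ → ℝ) (u : ℝ → ℝ) (x : ℝ) : ℝ :=
  (1 / 2) * (∫ y in (0:ℝ)..x, kc y (x - y) * u y * u (x - y))
    - u x * ∫ y in Set.Ioi (0:ℝ), kc x y * u y

/-- The fragmentation operator:
`Q_f(u)(x) = (1/2) u(x) ∫_0^x k_f(y, x−y) dy − ∫_0^∞ k_f(x,y) u(x+y) dy`. -/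
noncomputable def Qf (kf : ℝ → ℝ → ℝ) (u : ℝ → ℝ) (x : ℝ) : ℝ :=
  (1 / 2) * u x * (∫ y in (0:ℝ)..x, kf y (x - y))
    - ∫ y in Set.Ioi (0:ℝ), kf x y * u (x + y)

/-- The polymerization transport rate `T(V,x) = V·k_on(x) − k_off(x)`. -/
noncomputable def Trate (kon koff : ℝ → ℝ) (V x : ℝ) : ℝ := V * kon x - koff x

/-!
The total mass `V t + ∫₀^∞ x u(x,t) dx` has zero time derivative. Differentiating under the
integral sign and inserting the equation for `u`, the transport term integrates by parts to
`∫₀^∞ T(V,x) u(x,t) dx`, which cancels `V'`. Coagulation and fragmentation are both of the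
gain–loss form `(1/2) ∫₀^x P(y, x-y) dy - ∫₀^∞ P(x,y) dy` with a symmetric `P`, and such a term
has zero first moment: the substitution `(x, y) ↦ (y, x - y)` turns the first moment of the gain
into `(1/2) ∬ (y + z) P(y,z)`, which by symmetry is `∬ y P(y,z)`, the first moment of the loss.
-/

open Set Filter Topology

local notation "μ₊" => (volume.restrict (Ioi (0:ℝ)) : Measure ℝ)

noncomputable def firstMoment (v : ℝ → ℝ) : ℝ := ∫ x in Ioi 0, x * v x

theorem setIntegral_Ioi_eq_intervalIntegral {f : ℝ → ℝ} {M : ℝ} (hM : 0 ≤ M)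
    (hf : ∀ x, M < x → f x = 0) : ∫ x in Ioi 0, f x = ∫ x in 0..M, f x := by
  rw [intervalIntegral.integral_of_le hM]
  refine setIntegral_eq_of_subset_of_forall_sdiff_eq_zero measurableSet_Ioi Ioc_subset_Ioi_self ?_
  rintro x ⟨hx, hxM⟩
  exact hf x (lt_of_not_ge fun h => hxM ⟨hx, h⟩)

theorem integrableOn_Ioi_of_integrableOn_Ioc {f : ℝ → ℝ} {M : ℝ}
    (hf : IntegrableOn f (Ioc 0 M)) (h0 : ∀ x, M < x → f x = 0) : IntegrableOn f (Ioi 0) :=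
  hf.of_forall_sdiff_eq_zero measurableSet_Ioi fun x ⟨hx, hxM⟩ =>
    h0 x (lt_of_not_ge fun h => hxM ⟨hx, h⟩)

theorem integrableOn_Ioi_of_continuousOn {f : ℝ → ℝ} {M : ℝ} (hf : ContinuousOn f (Ici 0))
    (h0 : ∀ x, M < x → f x = 0) : IntegrableOn f (Ioi 0) :=
  integrableOn_Ioi_of_integrableOn_Ioc
    ((hf.mono Icc_subset_Ici_self).integrableOn_Icc.mono_set Ioc_subset_Icc_self) h0

theorem integrable_and_integral_Ioi_mul_deriv {f : ℝ → ℝ} {M : ℝ}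
    (hf : ContDiffOn ℝ 1 f (Ici 0)) (hM : 0 ≤ M) (h0 : ∀ x ≥ M, f x = 0) :
    IntegrableOn (fun x => x * deriv f x) (Ioi 0) ∧
      ∫ x in Ioi 0, x * deriv f x = -∫ x in Ioi 0, f x := by
  have hderiv : ∀ x > 0, HasDerivAt f (derivWithin f (Ici 0) x) x := fun x hx => by
    have hnhds : Ici 0 ∈ 𝓝 x := Ici_mem_nhds hx
    rw [derivWithin_of_mem_nhds hnhds]
    exact ((hf.differentiableOn one_ne_zero).differentiableAt hnhds).hasDerivAt
  have hderiv0 : ∀ x, M < x → x * deriv f x = 0 := fun x hx => by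
    have hf0 : f =ᶠ[𝓝 x] fun _ => 0 := eventually_gt_nhds hx |>.mono fun y hy => h0 y hy.le
    rw [hf0.deriv_eq, deriv_const, mul_zero]
  have hint : IntegrableOn (fun x => x * deriv f x) (Ioc 0 M) := by
    refine IntegrableOn.congr_fun ?_ (fun x hx => by rw [(hderiv x hx.1).deriv]) measurableSet_Ioc
    exact ((continuousOn_id.mul (hf.continuousOn_derivWithin (uniqueDiffOn_Ici 0) le_rfl)).mono
      Icc_subset_Ici_self).integrableOn_Icc.mono_set Ioc_subset_Icc_self
  refine ⟨integrableOn_Ioi_of_integrableOn_Ioc hint hderiv0, ?_⟩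
  have hfi : IntervalIntegrable f volume 0 M :=
    (hf.continuousOn.mono (by simp [uIcc_of_le hM, Icc_subset_Ici_self])).intervalIntegrable
  have hint' : IntervalIntegrable (fun x => x * deriv f x) volume 0 M :=
    (intervalIntegrable_iff_integrableOn_Ioc_of_le hM).2 hint
  have hFTC : ∫ x in 0..M, (f x + x * deriv f x) = M * f M - 0 * f 0 := by
    refine intervalIntegral.integral_eq_sub_of_hasDerivAt_of_le hM
      ((continuousOn_id.mul hf.continuousOn).mono Icc_subset_Ici_self) (fun x hx => ?_)
      (hfi.add hint')
    simpa [(hderiv x hx.1).deriv] using (hasDerivAt_id x).mul (hderiv x hx.1)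
  rw [intervalIntegral.integral_add hfi hint', h0 M le_rfl] at hFTC
  rw [setIntegral_Ioi_eq_intervalIntegral hM hderiv0,
    setIntegral_Ioi_eq_intervalIntegral hM fun x hx => h0 x hx.le]
  linarith

theorem integrable_prod_Ioi_of_continuousOn {F : ℝ × ℝ → ℝ} {M : ℝ}
    (hF : ContinuousOn F (Ici 0 ×ˢ Ici 0))
    (h0 : ∀ p : ℝ × ℝ, 0 < p.1 → 0 < p.2 → M < p.1 ∨ M < p.2 → F p = 0) :
    Integrable F (μ₊.prod μ₊) := by
  rw [Measure.prod_restrict]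
  have hK : IntegrableOn F (Icc 0 M ×ˢ Icc 0 M) (volume.prod volume) :=
    (hF.mono (prod_mono Icc_subset_Ici_self Icc_subset_Ici_self)).integrableOn_compact
      (isCompact_Icc.prod isCompact_Icc)
  refine hK.of_forall_sdiff_eq_zero (measurableSet_Ioi.prod measurableSet_Ioi) ?_
  rintro p ⟨⟨h1, h2⟩, hpK⟩
  refine h0 p h1 h2 ?_
  by_contra! h
  exact hpK ⟨⟨h1.le, h.1⟩, ⟨h2.le, h.2⟩⟩

theorem integral_indicator_prod_Ioi_sub (F : ℝ → ℝ → ℝ) (x : ℝ) :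
    ∫ y, (Ioi 0 ×ˢ Ioi 0).indicator (fun p : ℝ × ℝ => F p.1 p.2) (y, x - y) =
      (Ioi 0).indicator (fun x => ∫ y in 0..x, F y (x - y)) x := by
  have hslice :
      (fun y => (Ioi 0 ×ˢ Ioi 0).indicator (fun p : ℝ × ℝ => F p.1 p.2) (y, x - y)) =
        (Ioo 0 x).indicator fun y => F y (x - y) := by
    ext y
    simp [indicator, sub_pos]
  rw [hslice, integral_indicator measurableSet_Ioo]
  by_cases hx : x ∈ Ioi 0
  · rw [indicator_of_mem hx, intervalIntegral.integral_of_le (le_of_lt hx),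
      integral_Ioc_eq_integral_Ioo]
  · rw [indicator_of_notMem hx, Ioo_eq_empty (by simpa using hx), Measure.restrict_empty,
      integral_zero_measure]

theorem integrable_and_integral_Ioi_intervalIntegral_sub {F : ℝ → ℝ → ℝ}
    (hF : Integrable (fun p : ℝ × ℝ => F p.1 p.2) (μ₊.prod μ₊)) :
    Integrable (fun x => ∫ y in 0..x, F y (x - y)) μ₊ ∧
      ∫ x in Ioi 0, ∫ y in 0..x, F y (x - y) = ∫ p, F p.1 p.2 ∂(μ₊.prod μ₊) := by
  have hQ : MeasurableSet (Ioi (0:ℝ) ×ˢ Ioi (0:ℝ)) := measurableSet_Ioi.prod measurableSet_Ioi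
  have hG : Integrable ((Ioi 0 ×ˢ Ioi 0).indicator fun p : ℝ × ℝ => F p.1 p.2)
      (volume.prod volume) := by
    rw [integrable_indicator_iff hQ, IntegrableOn, ← Measure.prod_restrict]
    exact hF
  have hφ := measurePreserving_prod_sub_swap (volume : Measure ℝ) volume
  have hGφ := (hφ.integrable_comp hG.aestronglyMeasurable).2 hG
  have hinner : Integrable ((Ioi 0).indicator fun x => ∫ y in 0..x, F y (x - y)) volume := by
    simpa only [Function.comp_def, integral_indicator_prod_Ioi_sub] using hGφ.integral_prod_left
  refine ⟨(integrable_indicator_iff measurableSet_Ioi).1 hinner, ?_⟩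
  calc ∫ x in Ioi 0, ∫ y in 0..x, F y (x - y)
        = ∫ x, (Ioi 0).indicator (fun x => ∫ y in 0..x, F y (x - y)) x :=
          (integral_indicator measurableSet_Ioi).symm
      _ = ∫ z, (Ioi 0 ×ˢ Ioi 0).indicator (fun p : ℝ × ℝ => F p.1 p.2) (z.2, z.1 - z.2)
            ∂(volume.prod volume) := by
          simp_rw [← integral_indicator_prod_Ioi_sub]
          exact (integral_prod _ hGφ).symm
      _ = ∫ z, (Ioi 0 ×ˢ Ioi 0).indicator (fun p : ℝ × ℝ => F p.1 p.2) z
            ∂(volume.prod volume) := by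
          conv_rhs => rw [← hφ.map_eq]
          refine (integral_map hφ.measurable.aemeasurable ?_).symm
          rw [hφ.map_eq]
          exact hG.aestronglyMeasurable
      _ = ∫ p, F p.1 p.2 ∂(μ₊.prod μ₊) := by
          rw [integral_indicator hQ, Measure.prod_restrict]

noncomputable def gainLoss (P : ℝ → ℝ → ℝ) (x : ℝ) : ℝ :=
  (1 / 2) * (∫ y in (0:ℝ)..x, P y (x - y)) - ∫ y in Ioi (0:ℝ), P x y

theorem integrable_and_firstMoment_gainLoss_eq_zero {P : ℝ → ℝ → ℝ}
    (hP : Integrable (fun p : ℝ × ℝ => p.1 * P p.1 p.2) (μ₊.prod μ₊))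
    (hsymm : ∀ y > 0, ∀ z > 0, P y z = P z y) :
    Integrable (fun x => x * gainLoss P x) μ₊ ∧ firstMoment (gainLoss P) = 0 := by
  have hae : (fun p : ℝ × ℝ => p.2 * P p.1 p.2) =ᵐ[μ₊.prod μ₊]
      fun p => (fun q : ℝ × ℝ => q.1 * P q.1 q.2) p.swap := by
    rw [Measure.prod_restrict]
    filter_upwards [ae_restrict_mem (measurableSet_Ioi.prod measurableSet_Ioi)] with p hp
    simp [hsymm p.1 hp.1 p.2 hp.2]
  have hP' : Integrable (fun p : ℝ × ℝ => p.2 * P p.1 p.2) (μ₊.prod μ₊) :=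
    hP.swap.congr hae.symm
  obtain ⟨hgain_int, hgain⟩ :=
    integrable_and_integral_Ioi_intervalIntegral_sub (F := fun y z => (y + z) * P y z)
      ((hP.add hP').congr (.of_forall fun p => by simp only [Pi.add_apply]; ring))
  have hloss_int : Integrable (fun x => ∫ y in Ioi 0, x * P x y) μ₊ := hP.integral_prod_left
  have hloss :
      ∫ x in Ioi 0, ∫ y in Ioi 0, x * P x y = ∫ p, p.1 * P p.1 p.2 ∂(μ₊.prod μ₊) :=
    integral_integral hP
  have hsplit : ∫ p, (p.1 + p.2) * P p.1 p.2 ∂(μ₊.prod μ₊) =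
        ∫ p, p.1 * P p.1 p.2 ∂(μ₊.prod μ₊) + ∫ p, p.2 * P p.1 p.2 ∂(μ₊.prod μ₊) := by
    rw [← integral_add hP hP']
    simp only [add_mul]
  have hpt : ∀ x, x * gainLoss P x =
      (1 / 2) * (∫ y in 0..x, (y + (x - y)) * P y (x - y)) - ∫ y in Ioi 0, x * P x y := by
    intro x
    simp only [gainLoss, add_sub_cancel, intervalIntegral.integral_const_mul, integral_const_mul]
    ring
  simp only [firstMoment, hpt]
  refine ⟨(hgain_int.const_mul _).sub hloss_int, ?_⟩
  rw [integral_sub (hgain_int.const_mul _) hloss_int, integral_const_mul, hgain, hloss, hsplit,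
    integral_congr_ae hae, integral_prod_swap fun q : ℝ × ℝ => q.1 * P q.1 q.2]
  ring

theorem Qc_eq_gainLoss (kc : ℝ → ℝ → ℝ) (v : ℝ → ℝ) :
    Qc kc v = gainLoss fun y z => kc y z * v y * v z := by
  funext x
  simp only [Qc, gainLoss, ← integral_const_mul]
  congr 2 with y
  ring

theorem Qf_eq_gainLoss (kf : ℝ → ℝ → ℝ) (v : ℝ → ℝ) :
    Qf kf v = gainLoss fun y z => kf y z * v (y + z) := by
  funext x
  simp only [Qf, gainLoss, add_sub_cancel, intervalIntegral.integral_mul_const]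
  ring

section MassConservation

variable {M : ℝ} {v : ℝ → ℝ}

theorem integrable_and_firstMoment_Qc_eq_zero {kc : ℝ → ℝ → ℝ}
    (hkc : ContinuousOn (fun p : ℝ × ℝ => kc p.1 p.2) (Ici 0 ×ˢ Ici 0))
    (hkc_symm : ∀ x ∈ Ici (0:ℝ), ∀ y ∈ Ici (0:ℝ), kc x y = kc y x)
    (hv : ContinuousOn v (Ici 0)) (hv0 : ∀ x ≥ M, v x = 0) :
    Integrable (fun x => x * Qc kc v x) μ₊ ∧ firstMoment (Qc kc v) = 0 := by
  rw [Qc_eq_gainLoss]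
  refine integrable_and_firstMoment_gainLoss_eq_zero
    (integrable_prod_Ioi_of_continuousOn (M := M) ?_ ?_) fun y hy z hz => by
      rw [hkc_symm y hy.le z hz.le]; ring
  · exact continuous_fst.continuousOn.mul ((hkc.mul (hv.comp continuous_fst.continuousOn
      fun p hp => hp.1)).mul (hv.comp continuous_snd.continuousOn fun p hp => hp.2))
  · rintro p - - (h | h) <;> simp [hv0 _ h.le]

theorem integrable_and_firstMoment_Qf_eq_zero {kf : ℝ → ℝ → ℝ}
    (hkf : ContinuousOn (fun p : ℝ × ℝ => kf p.1 p.2) (Ici 0 ×ˢ Ici 0))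
    (hkf_symm : ∀ x ∈ Ici (0:ℝ), ∀ y ∈ Ici (0:ℝ), kf x y = kf y x)
    (hv : ContinuousOn v (Ici 0)) (hv0 : ∀ x ≥ M, v x = 0) :
    Integrable (fun x => x * Qf kf v x) μ₊ ∧ firstMoment (Qf kf v) = 0 := by
  rw [Qf_eq_gainLoss]
  refine integrable_and_firstMoment_gainLoss_eq_zero
    (integrable_prod_Ioi_of_continuousOn (M := M) ?_ ?_) fun y hy z hz => by
      rw [hkf_symm y hy.le z hz.le, add_comm]
  · exact continuous_fst.continuousOn.mul (hkf.mul (hv.comp (by fun_prop)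
      fun p hp => add_nonneg (mem_Ici.1 hp.1) (mem_Ici.1 hp.2)))
  · rintro p h1 h2 h
    rw [hv0 _ (by rcases h with h | h <;> linarith), mul_zero, mul_zero]

theorem firstMoment_transport_add_Qc_sub_Qf {kon koff : ℝ → ℝ} {kc kf : ℝ → ℝ → ℝ} (W : ℝ)
    (hkon : ContDiffOn ℝ 1 kon (Ici 0)) (hkoff : ContDiffOn ℝ 1 koff (Ici 0))
    (hkc : ContinuousOn (fun p : ℝ × ℝ => kc p.1 p.2) (Ici 0 ×ˢ Ici 0))
    (hkc_symm : ∀ x ∈ Ici (0:ℝ), ∀ y ∈ Ici (0:ℝ), kc x y = kc y x)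
    (hkf : ContinuousOn (fun p : ℝ × ℝ => kf p.1 p.2) (Ici 0 ×ˢ Ici 0))
    (hkf_symm : ∀ x ∈ Ici (0:ℝ), ∀ y ∈ Ici (0:ℝ), kf x y = kf y x)
    (hv : ContDiffOn ℝ 1 v (Ici 0)) (hM : 0 ≤ M) (hv0 : ∀ x ≥ M, v x = 0) :
    firstMoment (fun x => -deriv (fun y => Trate kon koff W y * v y) x + Qc kc v x - Qf kf v x) =
      ∫ x in Ioi 0, Trate kon koff W x * v x := by
  obtain ⟨hT_int, hT⟩ :=
    integrable_and_integral_Ioi_mul_deriv (f := fun y => Trate kon koff W y * v y)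
      (((contDiffOn_const.mul hkon).sub hkoff).mul hv) hM fun x hx => by simp [hv0 x hx]
  obtain ⟨hc_int, hc⟩ := integrable_and_firstMoment_Qc_eq_zero hkc hkc_symm hv.continuousOn hv0
  obtain ⟨hf_int, hf⟩ := integrable_and_firstMoment_Qf_eq_zero hkf hkf_symm hv.continuousOn hv0
  have hneg : Integrable (fun x => -(x * deriv (fun y => Trate kon koff W y * v y) x)) μ₊ :=
    hT_int.neg
  have hsum : Integrable
      (fun x => -(x * deriv (fun y => Trate kon koff W y * v y) x) + x * Qc kc v x) μ₊ :=
    hneg.add hc_int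
  simp only [firstMoment, mul_sub, mul_add, mul_neg] at hc hf ⊢
  rw [integral_sub hsum hf_int, integral_add hneg hc_int, integral_neg, hT, hc, hf]
  ring

end MassConservation

theorem DifferentiableWithinAt.hasDerivAt_partial_snd {f : ℝ × ℝ → ℝ} {s : Set (ℝ × ℝ)} {p : ℝ × ℝ}
    (hf : DifferentiableWithinAt ℝ f s p) (hs : s ∈ 𝓝 p) :
    HasDerivAt (fun τ => f (p.1, τ)) (fderivWithin ℝ f s p (0, 1)) p.2 := by
  rw [fderivWithin_of_mem_nhds hs]
  exact (hf.differentiableAt hs).hasFDerivAt.comp_hasDerivAt p.2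
    ((hasDerivAt_const p.2 p.1).prodMk (hasDerivAt_id p.2))

theorem constant_of_hasDerivAt_zero {f : ℝ → ℝ} {a b : ℝ} (hf : ContinuousOn f (Icc a b))
    (hf' : ∀ x ∈ Ioo a b, HasDerivAt f 0 x) : ∀ t ∈ Icc a b, f t = f a := by
  rintro t ⟨hat, htb⟩
  rcases hat.eq_or_lt with rfl | hat
  · rfl
  obtain ⟨c, -, hc⟩ := exists_hasDerivAt_eq_slope f (fun _ => 0) hat
    (hf.mono (Icc_subset_Icc_right htb)) fun x hx => hf' x ⟨hx.1, hx.2.trans_le htb⟩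
  rw [eq_comm, div_eq_zero_iff, sub_eq_zero, sub_eq_zero] at hc
  exact hc.resolve_right hat.ne'

section TimeDependence

variable {u : ℝ → ℝ → ℝ} {a b M : ℝ}

theorem firstMoment_eq_intervalIntegral (hM : 0 ≤ M)
    (hsupp : ∀ x ≥ M, ∀ t ∈ Icc a b, u x t = 0) {t : ℝ} (ht : t ∈ Icc a b) :
    firstMoment (u · t) = ∫ x in 0..M, x * u x t :=
  setIntegral_Ioi_eq_intervalIntegral hM fun x hx => by simp [hsupp x hx.le t ht]

theorem continuousOn_firstMoment
    (hu : ContinuousOn (fun p : ℝ × ℝ => u p.1 p.2) (Ici 0 ×ˢ Icc a b)) (hM : 0 ≤ M)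
    (hsupp : ∀ x ≥ M, ∀ t ∈ Icc a b, u x t = 0) :
    ContinuousOn (fun t => firstMoment (u · t)) (Icc a b) := by
  refine ContinuousOn.congr ?_ fun t ht => firstMoment_eq_intervalIntegral hM hsupp ht
  obtain ⟨C, hC⟩ := (isCompact_Icc.prod isCompact_Icc).exists_bound_of_continuousOn
    (hu.mono (prod_mono (Icc_subset_Ici_self : Icc 0 M ⊆ Ici 0) subset_rfl))
  have hM' : uIoc 0 M ⊆ Ici (0:ℝ) := by
    rw [uIoc_of_le hM]; exact Ioc_subset_Ioi_self.trans Ioi_subset_Ici_self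
  intro t ht
  refine intervalIntegral.continuousWithinAt_of_dominated_interval (bound := fun _ => M * C)
    ?_ ?_ intervalIntegrable_const ?_
  · filter_upwards [self_mem_nhdsWithin] with τ hτ
    exact (continuousOn_id.mul ((hu.uncurry_right (f := u) τ hτ).mono hM')).aestronglyMeasurable
      measurableSet_uIoc
  · filter_upwards [self_mem_nhdsWithin] with τ hτ
    refine .of_forall fun x hx => ?_
    rw [uIoc_of_le hM] at hx
    rw [norm_mul, Real.norm_of_nonneg hx.1.le]
    exact mul_le_mul hx.2 (hC (x, τ) ⟨Ioc_subset_Icc_self hx, hτ⟩) (norm_nonneg _) hM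
  · refine .of_forall fun x hx => ?_
    exact continuousWithinAt_const.mul ((hu.uncurry_left (f := u) x (hM' hx)) t ht)

theorem exists_continuousOn_partial_snd
    (hu : ContDiffOn ℝ 1 (fun p : ℝ × ℝ => u p.1 p.2) (Ici 0 ×ˢ Icc a b)) (hab : a < b) :
    ∃ dtu : ℝ × ℝ → ℝ, ContinuousOn dtu (Ici 0 ×ˢ Icc a b) ∧
      ∀ x > 0, ∀ τ ∈ Ioo a b, HasDerivAt (u x ·) (dtu (x, τ)) τ :=
  ⟨fun p => fderivWithin ℝ (fun p : ℝ × ℝ => u p.1 p.2) (Ici 0 ×ˢ Icc a b) p (0, 1),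
    (hu.continuousOn_fderivWithin ((uniqueDiffOn_Ici 0).prod (uniqueDiffOn_Icc hab))
      le_rfl).clm_apply continuousOn_const,
    fun _ hx _ hτ => DifferentiableWithinAt.hasDerivAt_partial_snd
      (hu.differentiableOn one_ne_zero _ ⟨mem_Ici.2 hx.le, Ioo_subset_Icc_self hτ⟩)
      (prod_mem_nhds (Ici_mem_nhds hx) (Icc_mem_nhds hτ.1 hτ.2))⟩

theorem hasDerivAt_intervalIntegral_mul_of_partial_snd
    (hu : ContinuousOn (fun p : ℝ × ℝ => u p.1 p.2) (Ici 0 ×ˢ Icc a b)) {dtu : ℝ × ℝ → ℝ}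
    (hdtu_cont : ContinuousOn dtu (Ici 0 ×ˢ Icc a b))
    (hdtu : ∀ x > 0, ∀ τ ∈ Ioo a b, HasDerivAt (u x ·) (dtu (x, τ)) τ) (hM : 0 ≤ M) {t : ℝ}
    (ht : t ∈ Ioo a b) :
    HasDerivAt (fun s => ∫ x in 0..M, x * u x s) (∫ x in 0..M, x * dtu (x, t)) t := by
  obtain ⟨C, hC⟩ := (isCompact_Icc.prod isCompact_Icc).exists_bound_of_continuousOn
    (hdtu_cont.mono (prod_mono (Icc_subset_Ici_self : Icc 0 M ⊆ Ici 0) subset_rfl))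
  have hIoc : uIoc 0 M = Ioc 0 M := uIoc_of_le hM
  have hM' : uIoc 0 M ⊆ Ici (0:ℝ) := by
    rw [hIoc]; exact Ioc_subset_Ioi_self.trans Ioi_subset_Ici_self
  refine (intervalIntegral.hasDerivAt_integral_of_dominated_loc_of_deriv_le
    (F' := fun τ x => x * dtu (x, τ)) (bound := fun _ => M * C) (Ioo_mem_nhds ht.1 ht.2)
    ?_ ?_ ?_ ?_ intervalIntegrable_const ?_).2
  · filter_upwards [Ioo_mem_nhds ht.1 ht.2] with τ hτ
    exact (continuousOn_id.mul ((hu.uncurry_right (f := u) τ (Ioo_subset_Icc_self hτ)).mono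
      hM')).aestronglyMeasurable measurableSet_uIoc
  · refine ContinuousOn.intervalIntegrable ?_
    exact continuousOn_id.mul ((hu.uncurry_right (f := u) t (Ioo_subset_Icc_self ht)).mono
      (by simp [uIcc_of_le hM, Icc_subset_Ici_self]))
  · refine (continuousOn_id.mul (hdtu_cont.comp (by fun_prop) fun x hx => ?_)
      ).aestronglyMeasurable measurableSet_uIoc
    exact ⟨hM' hx, Ioo_subset_Icc_self ht⟩
  · refine .of_forall fun x hx τ hτ => ?_
    rw [hIoc] at hx
    rw [norm_mul, Real.norm_of_nonneg hx.1.le]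
    exact mul_le_mul hx.2 (hC (x, τ) ⟨Ioc_subset_Icc_self hx, Ioo_subset_Icc_self hτ⟩)
      (norm_nonneg _) hM
  · refine .of_forall fun x hx τ hτ => ?_
    rw [hIoc] at hx
    exact (hdtu x hx.1 τ hτ).const_mul x

theorem hasDerivAt_firstMoment
    (hu : ContDiffOn ℝ 1 (fun p : ℝ × ℝ => u p.1 p.2) (Ici 0 ×ˢ Icc a b)) (hM : 0 ≤ M)
    (hsupp : ∀ x ≥ M, ∀ t ∈ Icc a b, u x t = 0) {t : ℝ} (ht : t ∈ Ioo a b) :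
    HasDerivAt (fun s => firstMoment (u · s)) (firstMoment fun x => deriv (u x ·) t) t := by
  obtain ⟨dtu, hdtu_cont, hdtu⟩ := exists_continuousOn_partial_snd hu (ht.1.trans ht.2)
  have hmoment : (fun s => firstMoment (u · s)) =ᶠ[𝓝 t] fun s => ∫ x in 0..M, x * u x s :=
    eventually_of_mem (Ioo_mem_nhds ht.1 ht.2) fun s hs =>
      firstMoment_eq_intervalIntegral hM hsupp (Ioo_subset_Icc_self hs)
  have hderiv : firstMoment (fun x => deriv (u x ·) t) = ∫ x in 0..M, x * dtu (x, t) := by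
    rw [firstMoment, setIntegral_Ioi_eq_intervalIntegral hM]
    · refine intervalIntegral.integral_congr_ae (.of_forall fun x hx => ?_)
      rw [uIoc_of_le hM] at hx
      rw [(hdtu x hx.1 t ht).deriv]
    · intro x hx
      have hzero : (u x ·) =ᶠ[𝓝 t] fun _ => 0 :=
        eventually_of_mem (Ioo_mem_nhds ht.1 ht.2) fun s hs =>
          hsupp x hx.le s (Ioo_subset_Icc_self hs)
      rw [hzero.deriv_eq, deriv_const, mul_zero]
  rw [hderiv]
  exact (hasDerivAt_intervalIntegral_mul_of_partial_snd hu.continuousOn hdtu_cont hdtu hM ht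
    ).congr_of_eventuallyEq hmoment

end TimeDependence

theorem monomer_mass_conservation_formula_general
    (kon koff : ℝ → ℝ) (kc kf : ℝ → ℝ → ℝ) (T₀ : ℝ)
    (V : ℝ → ℝ) (u : ℝ → ℝ → ℝ) (V₀ : ℝ) (u₀ : ℝ → ℝ)
    (hV0 : V 0 = V₀) (hu0 : ∀ x, u x 0 = u₀ x)
    (hkon : ContDiffOn ℝ 1 kon (Set.Ici 0))
    (hkoff : ContDiffOn ℝ 1 koff (Set.Ici 0))
    (hkc_cont : ContinuousOn (fun p : ℝ × ℝ => kc p.1 p.2) (Set.Ici 0 ×ˢ Set.Ici 0))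
    (hkc_symm : ∀ x ∈ Set.Ici (0:ℝ), ∀ y ∈ Set.Ici (0:ℝ), kc x y = kc y x)
    (hkf_cont : ContinuousOn (fun p : ℝ × ℝ => kf p.1 p.2) (Set.Ici 0 ×ˢ Set.Ici 0))
    (hkf_symm : ∀ x ∈ Set.Ici (0:ℝ), ∀ y ∈ Set.Ici (0:ℝ), kf x y = kf y x)
    (hV : ContDiffOn ℝ 1 V (Set.Icc 0 T₀))
    (hu : ContDiffOn ℝ 1 (fun p : ℝ × ℝ => u p.1 p.2) (Set.Ici 0 ×ˢ Set.Icc 0 T₀))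
    (hsupp : ∃ M : ℝ, 0 < M ∧ ∀ x ≥ M, ∀ t ∈ Set.Icc (0:ℝ) T₀, u x t = 0)
    (hODE : ∀ t ∈ Set.Ioo (0:ℝ) T₀,
      HasDerivAt V (-∫ x in Set.Ioi (0:ℝ), Trate kon koff (V t) x * u x t) t)
    (hPDE : ∀ t ∈ Set.Ioo (0:ℝ) T₀, ∀ x > (0:ℝ),
      HasDerivAt (fun s => u x s)
        (-(deriv (fun y => Trate kon koff (V t) y * u y t) x)
          + Qc kc (fun y => u y t) x - Qf kf (fun y => u y t) x) t) :
    ∀ t ∈ Set.Icc (0:ℝ) T₀,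
      V t = V₀ + ∫ x in Set.Ioi (0:ℝ), x * (u₀ x - u x t) := by
  obtain ⟨M, hM, hMsupp⟩ := hsupp
  have hslice : ∀ t ∈ Icc 0 T₀, ContDiffOn ℝ 1 (u · t) (Ici 0) := fun t ht =>
    hu.comp (contDiff_id.prodMk contDiff_const).contDiffOn fun x hx => ⟨hx, ht⟩
  have hconserved : ∀ t ∈ Ioo 0 T₀, HasDerivAt (fun s => V s + firstMoment (u · s)) 0 t := by
    intro t ht
    have hrate : firstMoment (fun x => deriv (u x ·) t) =
        ∫ x in Ioi 0, Trate kon koff (V t) x * u x t := by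
      rw [← firstMoment_transport_add_Qc_sub_Qf (V t) hkon hkoff hkc_cont hkc_symm hkf_cont
        hkf_symm (hslice t (Ioo_subset_Icc_self ht)) hM.le
        fun x hx => hMsupp x hx t (Ioo_subset_Icc_self ht)]
      exact setIntegral_congr_fun measurableSet_Ioi fun x hx =>
        congrArg (x * ·) (hPDE t ht x hx).deriv
    have h := (hODE t ht).add (hasDerivAt_firstMoment hu hM.le hMsupp ht)
    rwa [hrate, neg_add_cancel] at h
  have hconst := constant_of_hasDerivAt_zero
    (hV.continuousOn.add (continuousOn_firstMoment hu.continuousOn hM.le hMsupp)) hconserved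
  have hint : ∀ s ∈ Icc 0 T₀, IntegrableOn (fun x => x * u x s) (Ioi 0) := fun s hs =>
    integrableOn_Ioi_of_continuousOn (M := M) (continuousOn_id.mul (hslice s hs).continuousOn)
      fun x hx => by simp [hMsupp x hx.le s hs]
  intro t ht
  have h0 : (0:ℝ) ∈ Icc 0 T₀ := ⟨le_rfl, ht.1.trans ht.2⟩
  simp only [← hu0, mul_sub]
  rw [integral_sub (hint 0 h0) (hint t ht), ← hV0]
  have h := hconst t ht
  simp only [Pi.add_apply, firstMoment] at h
  linarith

/-- the ODE for the monomer concentration can be replaced by the mass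
conservation formula `V(t) = V₀ + ∫_0^∞ x (u₀(x) − u(x,t)) dx`. -/
theorem monomer_mass_conservation_formula
    (kon koff : ℝ → ℝ) (kc kf : ℝ → ℝ → ℝ) (T₀ : ℝ) (hT₀ : 0 < T₀)
    (V : ℝ → ℝ) (u : ℝ → ℝ → ℝ) (V₀ : ℝ) (u₀ : ℝ → ℝ)
    (hV0 : V 0 = V₀) (hu0 : ∀ x, u x 0 = u₀ x)
    (hkon : ContDiffOn ℝ 1 kon (Set.Ici 0))
    (hkoff : ContDiffOn ℝ 1 koff (Set.Ici 0))
    (hkc_cont : ContinuousOn (fun p : ℝ × ℝ => kc p.1 p.2) (Set.Ici 0 ×ˢ Set.Ici 0))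
    (hkc_symm : ∀ x ∈ Set.Ici (0:ℝ), ∀ y ∈ Set.Ici (0:ℝ), kc x y = kc y x)
    (hkf_cont : ContinuousOn (fun p : ℝ × ℝ => kf p.1 p.2) (Set.Ici 0 ×ˢ Set.Ici 0))
    (hkf_symm : ∀ x ∈ Set.Ici (0:ℝ), ∀ y ∈ Set.Ici (0:ℝ), kf x y = kf y x)
    (hV : ContDiffOn ℝ 1 V (Set.Icc 0 T₀))
    (hu : ContDiffOn ℝ 1 (fun p : ℝ × ℝ => u p.1 p.2) (Set.Ici 0 ×ˢ Set.Icc 0 T₀))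
    (hsupp : ∃ M : ℝ, 0 < M ∧ ∀ x ≥ M, ∀ t ∈ Set.Icc (0:ℝ) T₀, u x t = 0)
    (hODE : ∀ t ∈ Set.Ioo (0:ℝ) T₀,
      HasDerivAt V (-∫ x in Set.Ioi (0:ℝ), Trate kon koff (V t) x * u x t) t)
    (hPDE : ∀ t ∈ Set.Ioo (0:ℝ) T₀, ∀ x > (0:ℝ),
      HasDerivAt (fun s => u x s)
        (-(deriv (fun y => Trate kon koff (V t) y * u y t) x)
          + Qc kc (fun y => u y t) x - Qf kf (fun y => u y t) x) t) :
    ∀ t ∈ Set.Icc (0:ℝ) T₀,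
      V t = V₀ + ∫ x in Set.Ioi (0:ℝ), x * (u₀ x - u x t) :=
  monomer_mass_conservation_formula_general kon koff kc kf T₀ V u V₀ u₀ hV0 hu0 hkon hkoff hkc_cont
    hkc_symm hkf_cont hkf_symm hV hu hsupp hODE hPDE
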